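/- In the centrality game with m = 2, let x be a configuration, s a node with at least one in-neighbor, and k ∈ N_s^-(x). Then τ_k^s(x) ≤ (1−β/2)/((1−β)(η_s + (β/2)η_k)) and τ_i^s(x) ≤ 1/((1−β)(η_s + (β/2)η_k)) for every node i. -/

import Mathlib

open Finset Matrix

/-- Transition matrix entry of the Markov chain `P(x) = βR(x) + (1-β)𝟙ηᵀ` associated
with the out-degree-2 configuration `x` in the game `Γ(V, β, η, 2)`. -/
noncomputable def P2 {V : Type*} [DecidableEq V]
    (β : ℝ) (η : V → ℝ) (x : V → Finset V) (i j : V) : ℝ :=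
  β * (if j ∈ x i then (1 : ℝ) / 2 else 0) + (1 - β) * η j

/-!
Let `M = max τ`. From every node the chain enters `s` with probability at least `a = (1-β)η_s`
and `k` with probability at least `b = (1-β)η_k`, and from `k` it enters `s` with probability
`p = β/2 + (1-β)η_s`. Bounding all other terms of the first-step equation by `M` gives
`a M + b (M - τ_k) ≤ 1` at a maximiser and `(1 - b) τ_k ≤ 1 + (1 - p - b) M` at `k`.
Adding `1 - b` times the first to `b` times the second eliminates `τ_k` and leaves
`((1 - b) a + b p) M ≤ 1`, where `(1 - b) a + b p = (1-β)(η_s + (β/2)η_k)`; feeding this back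
into the inequality at `k` gives the sharper bound on `τ_k`.
-/

section HittingTime

variable {V : Type*} [Fintype V] {P : Matrix V V ℝ} {τ : V → ℝ} {s k : V}

def IsHittingTime (P : Matrix V V ℝ) (s : V) (τ : V → ℝ) : Prop :=
  τ s = 0 ∧ ∀ i, i ≠ s → τ i = 1 + ∑ j, P i j * τ j

lemma IsHittingTime.nonneg_of_forall_le (hτ : IsHittingTime P s τ) {M : ℝ}
    (hτM : ∀ j, τ j ≤ M) : 0 ≤ M :=
  hτ.1 ▸ hτM s

variable [DecidableEq V]

lemma sum_mul_le_sub_sum_mul_sub (hP : P ∈ rowStochastic ℝ V) {M : ℝ} (hτM : ∀ j, τ j ≤ M)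
    (i : V) (S : Finset V) : ∑ j, P i j * τ j ≤ M - ∑ j ∈ S, P i j * (M - τ j) := by
  have hsum : ∑ j, P i j * τ j = M - ∑ j, P i j * (M - τ j) := by
    simp [mul_sub, sum_sub_distrib, ← sum_mul, sum_row_of_mem_rowStochastic hP i]
  have hS : ∑ j ∈ S, P i j * (M - τ j) ≤ ∑ j, P i j * (M - τ j) :=
    sum_le_sum_of_subset_of_nonneg (subset_univ S) fun j _ _ ↦
      mul_nonneg (nonneg_of_mem_rowStochastic hP) (sub_nonneg.2 (hτM j))
  linarith

lemma add_le_one_of_mem_rowStochastic (hP : P ∈ rowStochastic ℝ V) (hks : k ≠ s) (i : V) :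
    P i s + P i k ≤ 1 := by
  rw [← sum_pair hks.symm, ← sum_row_of_mem_rowStochastic hP i]
  exact sum_le_sum_of_subset_of_nonneg (subset_univ _) fun j _ _ ↦ nonneg_of_mem_rowStochastic hP

lemma IsHittingTime.le_one_add_sub_sub (hτ : IsHittingTime P s τ) (hP : P ∈ rowStochastic ℝ V)
    {M : ℝ} (hτM : ∀ j, τ j ≤ M) (hks : k ≠ s) {i : V} (his : i ≠ s) {a b : ℝ}
    (ha : a ≤ P i s) (hb : b ≤ P i k) :
    τ i ≤ 1 + M - a * M - b * (M - τ k) := by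
  have hstep := sum_mul_le_sub_sum_mul_sub hP hτM i {s, k}
  rw [sum_pair hks.symm, hτ.1, sub_zero] at hstep
  have haM : a * M ≤ P i s * M := mul_le_mul_of_nonneg_right ha (hτ.nonneg_of_forall_le hτM)
  have hbM : b * (M - τ k) ≤ P i k * (M - τ k) :=
    mul_le_mul_of_nonneg_right hb (sub_nonneg.2 (hτM k))
  rw [hτ.2 i his]
  linarith

variable {a b p : ℝ}

lemma IsHittingTime.mul_le_one_of_forall_le (hτ : IsHittingTime P s τ)
    (hP : P ∈ rowStochastic ℝ V) (hks : k ≠ s) (ha : ∀ i, a ≤ P i s) (hb : ∀ i, b ≤ P i k)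
    (hp : p ≤ P k s) (hb0 : 0 ≤ b) {m : V} (hm : ∀ j, τ j ≤ τ m) :
    ((1 - b) * a + b * p) * τ m ≤ 1 := by
  by_cases hms : m = s
  · simp [hms, hτ.1]
  have hb1 : b ≤ 1 := (hb k).trans (le_one_of_mem_rowStochastic hP)
  have hk := hτ.le_one_add_sub_sub hP hm hks hks hp (hb k)
  have hmax := hτ.le_one_add_sub_sub hP hm hks hms (ha m) (hb m)
  nlinarith [mul_le_mul_of_nonneg_left hk hb0, mul_le_mul_of_nonneg_left hmax (sub_nonneg.2 hb1)]

lemma IsHittingTime.mul_le_one (hτ : IsHittingTime P s τ) (hP : P ∈ rowStochastic ℝ V)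
    (hks : k ≠ s) (ha : ∀ i, a ≤ P i s) (hb : ∀ i, b ≤ P i k) (hp : p ≤ P k s)
    (ha0 : 0 ≤ a) (hb0 : 0 ≤ b) (hp0 : 0 ≤ p) (i : V) :
    ((1 - b) * a + b * p) * τ i ≤ 1 := by
  obtain ⟨m, -, hm⟩ := exists_max_image univ τ ⟨s, mem_univ s⟩
  have hb1 : b ≤ 1 := (hb k).trans (le_one_of_mem_rowStochastic hP)
  have hQ : 0 ≤ (1 - b) * a + b * p := by
    have := sub_nonneg.2 hb1
    positivity
  calc ((1 - b) * a + b * p) * τ i ≤ ((1 - b) * a + b * p) * τ m :=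
        mul_le_mul_of_nonneg_left (hm i (mem_univ i)) hQ
    _ ≤ 1 := hτ.mul_le_one_of_forall_le hP hks ha hb hp hb0 fun j ↦ hm j (mem_univ j)

lemma IsHittingTime.mul_le_one_add_sub (hτ : IsHittingTime P s τ) (hP : P ∈ rowStochastic ℝ V)
    (hks : k ≠ s) (ha : ∀ i, a ≤ P i s) (hb : ∀ i, b ≤ P i k) (hp : p ≤ P k s)
    (ha0 : 0 ≤ a) (hb0 : 0 ≤ b) (hp0 : 0 < p) :
    ((1 - b) * a + b * p) * τ k ≤ 1 + a - p := by
  obtain ⟨m, -, hm⟩ := exists_max_image univ τ ⟨s, mem_univ s⟩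
  have hpb : p + b ≤ 1 := by linarith [add_le_one_of_mem_rowStochastic hP hks k, hb k]
  have hQ : 0 ≤ (1 - b) * a + b * p := by
    have : 0 ≤ 1 - b := by linarith
    positivity
  have hQM := hτ.mul_le_one hP hks ha hb hp ha0 hb0 hp0.le m
  have hk := hτ.le_one_add_sub_sub hP (fun j ↦ hm j (mem_univ j)) hks hks hp (hb k)
  have hscaled : (1 - b) * (((1 - b) * a + b * p) * τ k) ≤ (1 - b) * (1 + a - p) := by
    nlinarith [mul_le_mul_of_nonneg_left hk hQ,
      mul_le_mul_of_nonneg_left hQM (sub_nonneg.2 hpb : 0 ≤ 1 - (p + b))]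
  exact le_of_mul_le_mul_left hscaled (by linarith)

end HittingTime

section P2

variable {V : Type*} [DecidableEq V] {β : ℝ} {η : V → ℝ} {x : V → Finset V}

lemma P2_mem_rowStochastic [Fintype V] (hβ0 : 0 ≤ β) (hβ1 : β ≤ 1) (hη : ∀ i, 0 ≤ η i)
    (hηsum : ∑ i, η i = 1) (hcard : ∀ i, (x i).card = 2) :
    (P2 β η x : Matrix V V ℝ) ∈ rowStochastic ℝ V := by
  refine mem_rowStochastic_iff_sum.2 ⟨fun i j ↦ ?_, fun i ↦ ?_⟩
  · have := hη j
    have : 0 ≤ 1 - β := by linarith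
    unfold P2
    split_ifs <;> positivity
  · simp only [P2, sum_add_distrib, ← mul_sum, hηsum, sum_ite_mem, univ_inter, sum_const,
      hcard i, nsmul_eq_mul]
    ring

lemma le_P2 (hβ0 : 0 ≤ β) (i j : V) : (1 - β) * η j ≤ P2 β η x i j := by
  unfold P2
  split_ifs <;> linarith

lemma P2_apply_of_mem {i j : V} (h : j ∈ x i) : P2 β η x i j = β / 2 + (1 - β) * η j := by
  simp [P2, h, div_eq_mul_inv]

end P2

/-- in `Γ(V,β,η,2)`, if `k` is an in-neighbor of `s`, then
`τ k ≤ (1-β/2)/((1-β)(η_s + (β/2)η_k))` and `τ i ≤ 1/((1-β)(η_s + (β/2)η_k))`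
for every node `i`. -/
theorem hitting_time_refined_upper_bounds_m2
    {V : Type*} [Fintype V] [DecidableEq V]
    (β : ℝ) (hβ0 : 0 < β) (hβ1 : β < 1)
    (η : V → ℝ) (hη : ∀ i, 0 < η i) (hηsum : ∑ i, η i = 1)
    (x : V → Finset V) (hx : ∀ i, (x i).card = 2 ∧ i ∉ x i)
    (s : V) (τ : V → ℝ)
    (hτs : τ s = 0)
    (hτ : ∀ i, i ≠ s → τ i = 1 + ∑ j, P2 β η x i j * τ j)
    (k : V) (hk : s ∈ x k) :
    τ k ≤ (1 - β / 2) / ((1 - β) * (η s + (β / 2) * η k)) ∧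
    ∀ i, τ i ≤ 1 / ((1 - β) * (η s + (β / 2) * η k)) := by
  have hks : k ≠ s := fun h ↦ (hx k).2 (h ▸ hk)
  have hP := P2_mem_rowStochastic hβ0.le hβ1.le (fun i ↦ (hη i).le) hηsum fun i ↦ (hx i).1
  have hhit : IsHittingTime (P2 β η x) s τ := ⟨hτs, hτ⟩
  have h1β : 0 < 1 - β := sub_pos.2 hβ1
  have ha0 : 0 ≤ (1 - β) * η s := (mul_pos h1β (hη s)).le
  have hb0 : 0 ≤ (1 - β) * η k := (mul_pos h1β (hη k)).le
  have hp0 : 0 < β / 2 + (1 - β) * η s := add_pos (half_pos hβ0) (mul_pos h1β (hη s))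
  have hQ : (1 - (1 - β) * η k) * ((1 - β) * η s) + (1 - β) * η k * (β / 2 + (1 - β) * η s)
      = (1 - β) * (η s + (β / 2) * η k) := by ring
  have hQ0 : 0 < (1 - β) * (η s + (β / 2) * η k) :=
    mul_pos h1β (add_pos (hη s) (mul_pos (half_pos hβ0) (hη k)))
  have ha : ∀ i, (1 - β) * η s ≤ P2 β η x i s := fun i ↦ le_P2 hβ0.le i s
  have hb : ∀ i, (1 - β) * η k ≤ P2 β η x i k := fun i ↦ le_P2 hβ0.le i k
  have hp : β / 2 + (1 - β) * η s ≤ P2 β η x k s := (P2_apply_of_mem hk).ge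
  refine ⟨(le_div_iff₀ hQ0).2 ?_, fun i ↦ (le_div_iff₀ hQ0).2 ?_⟩
  · have hτk := hhit.mul_le_one_add_sub hP hks ha hb hp ha0 hb0 hp0
    rw [hQ] at hτk
    linarith
  · have hτi := hhit.mul_le_one hP hks ha hb hp ha0 hb0 hp0.le i
    rw [hQ] at hτi
    linarith
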